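/- arXiv:2511.14657 — 2 statements merged into one kernel-verified Lean document; each statement's English description precedes it below -/
import Mathlib

section
/- Symmetry lemma for cost-SR: let C be a clause and Γ a multiset of clauses of a MaxSAT instance. If there exists a permutation π of the variables (viewed as a substitution) such that (1) π maps the set of blocking variables to itself, (2) the substitution ¬C∘π satisfies C, and (3) Γ↾¬C ⊇ Γ↾(¬C∘π), then C is cost-SR w.r.t. Γ, with witnessing substitution ¬C∘π. In particular condition (3) holds whenever π is a symmetry of Γ, i.e., Γ = Γ↾π. -/
namespace PaperMaxSAT

/-- Variables are natural numbers. -/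
abbrev Var := ℕ

/-- A literal is a variable together with a polarity. -/
abbrev Lit := Var × Bool

/-- Negation of a literal. -/
def negLit (l : Lit) : Lit := (l.1, !l.2)

/-- A clause is a finite set of literals. -/
abbrev Clause := Finset Lit

/-- A CNF formula is a finite multiset of clauses. -/
abbrev CNF := Multiset Clause

/-- A tautological clause contains a literal together with its negation. -/
def isTaut (C : Clause) : Prop := ∃ l ∈ C, negLit l ∈ C

/-- The value of a substitution at a variable: a Boolean constant or a literal. -/
abbrev SubVal := Bool ⊕ Lit

/-- Negation on substitution values. -/
def negSV : SubVal → SubVal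
  | .inl b => .inl !b
  | .inr l => .inr (negLit l)

/-- A substitution maps each variable to `0`, `1` or a literal. -/
abbrev Sub := Var → SubVal

/-- Applying a substitution to a literal, respecting `σ(¬x) = ¬σ(x)`. -/
def appLit (σ : Sub) (l : Lit) : SubVal :=
  if l.2 then σ l.1 else negSV (σ l.1)

/-- The identity substitution. -/
def idSub : Sub := fun v => .inr (v, true)

/-- `σ(C) = 1` : some literal of `C` is mapped to true by `σ`. -/
def clauseTrue (σ : Sub) (C : Clause) : Prop := ∃ l ∈ C, appLit σ l = Sum.inl true

instance (σ : Sub) (C : Clause) : Decidable (clauseTrue σ C) := by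
  unfold clauseTrue; infer_instance

/-- `C↾σ` : the clause whose literals are the images under `σ` of the literals
of `C` mapped to literals (literals mapped to `0` are dropped). -/
def restrictClause (σ : Sub) (C : Clause) : Clause :=
  C.biUnion (fun l => match appLit σ l with
    | .inr m => {m}
    | _ => (∅ : Clause))

/-- `Γ↾σ` : restrict every clause of `Γ`; clauses mapped to `1` are removed. -/
def restrictCNF (σ : Sub) (Γ : CNF) : CNF :=
  (Γ.filter (fun C => ¬ clauseTrue σ C)).map (restrictClause σ)

/-- `σ ⊨ C` : `σ(C) = 1` or `σ(C)` is tautological. -/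
def subSat (σ : Sub) (C : Clause) : Prop :=
  clauseTrue σ C ∨ isTaut (restrictClause σ C)

/-- The assignment `¬C`, setting all literals of `C` to false. -/
def negSub (C : Clause) : Sub := fun v =>
  if (v, true) ∈ C then .inl false
  else if (v, false) ∈ C then .inl true
  else .inr (v, true)

/-- The substitution setting the literal `l` to true and touching nothing else. -/
def litSub (l : Lit) : Sub := fun v => if v = l.1 then .inl l.2 else .inr (v, true)

/-- Unit propagation derives the empty clause. -/
inductive UPFalse : CNF → Prop
  | empty {Γ : CNF} : (∅ : Clause) ∈ Γ → UPFalse Γ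
  | step {Γ : CNF} (l : Lit) : ({l} : Clause) ∈ Γ →
      UPFalse (restrictCNF (litSub l) Γ) → UPFalse Γ

/-- The unit clauses `¬l` for `l ∈ C`. -/
def negUnits (C : Clause) : CNF := C.val.map (fun l => ({negLit l} : Clause))

/-- `Γ ⊢₁ C` : unit propagation on `Γ↾¬C` produces the empty clause. -/
def UPimplies (Γ : CNF) (C : Clause) : Prop := UPFalse (Γ + negUnits C)

/-- `Γ ⊢₁ Δ` : `Γ ⊢₁ D` for every `D ∈ Δ`. -/
def UPimpliesAll (Γ Δ : CNF) : Prop := ∀ D ∈ Δ, UPimplies Γ D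

/-- Total assignments. -/
abbrev TAssign := Var → Bool

/-- A total assignment satisfies a clause. -/
def satC (α : TAssign) (C : Clause) : Prop := ∃ l ∈ C, α l.1 = l.2

instance (α : TAssign) (C : Clause) : Decidable (satC α C) := by
  unfold satC; infer_instance

/-- A total assignment satisfies a CNF. -/
def satCNF (α : TAssign) (Γ : CNF) : Prop := ∀ C ∈ Γ, satC α C

/-- `τ ∘ σ` : composition of a total assignment with a substitution. -/
def comp (τ : TAssign) (σ : Sub) : TAssign := fun v =>
  match σ v with
  | .inl b => b
  | .inr l => if l.2 then τ l.1 else !(τ l.1)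

/-- `τ` extends the assignment `¬C`. -/
def extendsNeg (τ : TAssign) (C : Clause) : Prop := ∀ l ∈ C, τ l.1 = !l.2

/-- The cost of a total assignment w.r.t. a set `B` of blocking variables:
the number of blocking variables set to true. -/
def cost (B : Finset Var) (α : TAssign) : ℕ := (B.filter (fun b => α b = true)).card

/-- The cost of a MaxSAT instance encoded with blocking variables `B`:
the minimum cost of a satisfying total assignment. -/
noncomputable def costCNF (B : Finset Var) (Γ : CNF) : ℕ :=
  sInf {k | ∃ α : TAssign, satCNF α Γ ∧ cost B α = k}

/-- `σ` witnesses that `C` is cost-SR w.r.t. `Γ` (with blocking variables `B`):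
the redundancy condition `Γ↾¬C ⊢₁ (Γ ∪ {C})↾σ` and the cost condition. -/
def CostSRwit (B : Finset Var) (Γ : CNF) (C : Clause) (σ : Sub) : Prop :=
  UPimpliesAll (restrictCNF (negSub C) Γ) (restrictCNF σ (C ::ₘ Γ)) ∧
  ∀ τ : TAssign, extendsNeg τ C → cost B (comp τ σ) ≤ cost B τ

/-- `C` is cost-SR w.r.t. `Γ`. -/
def CostSR (B : Finset Var) (Γ : CNF) (C : Clause) : Prop := ∃ σ, CostSRwit B Γ C σ

/-- A substitution which is an assignment: every value is `0`, `1`,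
or the variable itself. -/
def isAssign (σ : Sub) : Prop :=
  ∀ v, σ v = .inl true ∨ σ v = .inl false ∨ σ v = .inr (v, true)

/-- The variables of a clause. -/
def varsClause (C : Clause) : Finset Var := C.image Prod.fst

/-- The variables of a CNF. -/
def varsCNF (Γ : CNF) : Finset Var := (Γ.map varsClause).sup

/-- Membership in the domain of an assignment. -/
def subDom (σ : Sub) (v : Var) : Prop := ∃ b : Bool, σ v = .inl b

/-- `C` is cost-PR w.r.t. `Γ`: cost-SR witnessed by an assignment. -/
def CostPR (B : Finset Var) (Γ : CNF) (C : Clause) : Prop :=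
  ∃ σ, CostSRwit B Γ C σ ∧ isAssign σ

/-- `C` is cost-SPR w.r.t. `Γ`: cost-SR witnessed by an assignment with
domain `dom(¬C) = Var(C)`. -/
def CostSPR (B : Finset Var) (Γ : CNF) (C : Clause) : Prop :=
  ∃ σ, CostSRwit B Γ C σ ∧ isAssign σ ∧ (∀ v, subDom σ v ↔ v ∈ varsClause C)

/-- `C` is cost-LPR w.r.t. `Γ`: cost-SR witnessed by an assignment with
domain `dom(¬C)` differing from `¬C` on exactly one variable. -/
def CostLPR (B : Finset Var) (Γ : CNF) (C : Clause) : Prop :=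
  ∃ σ, CostSRwit B Γ C σ ∧ isAssign σ ∧ (∀ v, subDom σ v ↔ v ∈ varsClause C) ∧
    ((varsClause C).filter (fun v => σ v ≠ negSub C v)).card = 1

/-- `D` is a resolvent of `E₁` and `E₂`. -/
def resolvent (D E₁ E₂ : Clause) : Prop :=
  ∃ x : Var, (x, true) ∈ E₁ ∧ (x, false) ∈ E₂ ∧
    D = E₁.erase (x, true) ∪ E₂.erase (x, false)

/-- A derivation from `Γ` in the calculus with redundancy rule `Red`:
every clause of the list is in `Γ`, a weakening of an earlier clause,
a resolvent of two earlier clauses, or redundant (w.r.t. `Red`) relative to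
`Γ` together with the earlier clauses, using no new variables. -/
def IsDeriv (Red : Finset Var → CNF → Clause → Prop) (B : Finset Var) (Γ : CNF)
    (L : List Clause) : Prop :=
  ∀ i, ∀ hi : i < L.length,
    L[i] ∈ Γ ∨
    (∃ j, ∃ hj : j < i, L[j]'(hj.trans hi) ⊆ L[i]) ∨
    (∃ j k, ∃ hj : j < i, ∃ hk : k < i,
      resolvent L[i] (L[j]'(hj.trans hi)) (L[k]'(hk.trans hi))) ∨
    (Red B (Γ + (↑(L.take i) : CNF)) L[i] ∧ varsClause L[i] ⊆ varsCNF Γ)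

/-- `C ∨ ℓ` is a cost blocked clause (cost-BC) w.r.t. `Γ` and `ℓ`. -/
def CostBC (B : Finset Var) (Γ : CNF) (C : Clause) (l : Lit) : Prop :=
  (∀ D ∈ Γ, negLit l ∈ D → isTaut (C ∪ D.erase (negLit l))) ∧
  ¬(l.2 = true ∧ l.1 ∈ B)

/-- Hamming distance between two total assignments, over the variables in `V`. -/
def HD (V : Finset Var) (α β : TAssign) : ℕ := (V.filter (fun v => α v ≠ β v)).card

/-- `flip(C, σ) ≥ d` : some total assignment `τ` extending `¬C` has
Hamming distance (over `V`) at least `d` from `τ ∘ σ`. -/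
def flipGE (V : Finset Var) (C : Clause) (σ : Sub) (d : ℕ) : Prop :=
  ∃ τ : TAssign, extendsNeg τ C ∧ d ≤ HD V τ (comp τ σ)


/-! ### Auxiliary lemmas for the symmetry lemma -/

lemma restrictCNF_mono (σ : Sub) {Γ Γ' : CNF} (h : Γ ≤ Γ') :
    restrictCNF σ Γ ≤ restrictCNF σ Γ' :=
  Multiset.map_le_map (Multiset.filter_le_filter _ h)

lemma UPFalse_mono : ∀ {Γ : CNF}, UPFalse Γ → ∀ {Γ' : CNF}, Γ ≤ Γ' → UPFalse Γ' := by
  intro Γ h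
  induction h with
  | empty h => intro Γ' hle; exact UPFalse.empty (Multiset.mem_of_le hle h)
  | step l hl _ ih =>
      intro Γ' hle
      exact UPFalse.step l (Multiset.mem_of_le hle hl) (ih (restrictCNF_mono _ hle))

lemma restrictCNF_add (σ : Sub) (Γ₁ Γ₂ : CNF) :
    restrictCNF σ (Γ₁ + Γ₂) = restrictCNF σ Γ₁ + restrictCNF σ Γ₂ := by
  simp [restrictCNF, Multiset.filter_add]

lemma appLit_litSub_self (l : Lit) : appLit (litSub (negLit l)) l = .inl false := by
  cases l with
  | mk v b => cases b <;> simp [appLit, litSub, negLit, negSV]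

lemma appLit_litSub_other (k m : Lit) (h : m.1 ≠ k.1) : appLit (litSub k) m = .inr m := by
  cases m with
  | mk v b => cases b <;> simp_all [appLit, litSub, negSV, negLit]

lemma not_clauseTrue_unit (l : Lit) :
    ¬ clauseTrue (litSub (negLit l)) ({l} : Clause) := by
  simp [clauseTrue, appLit_litSub_self]

lemma restrictClause_unit_self (l : Lit) :
    restrictClause (litSub (negLit l)) ({l} : Clause) = (∅ : Clause) := by
  simp [restrictClause, appLit_litSub_self]

lemma empty_mem_restrict_of_unit {Γ : CNF} (l : Lit) (h : ({l} : Clause) ∈ Γ) :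
    (∅ : Clause) ∈ restrictCNF (litSub (negLit l)) Γ := by
  rw [restrictCNF, Multiset.mem_map]
  exact ⟨{l}, Multiset.mem_filter.2 ⟨h, not_clauseTrue_unit l⟩, restrictClause_unit_self l⟩

lemma negLit_mem_negUnits {C : Clause} {l : Lit} (h : l ∈ C) :
    ({negLit l} : Clause) ∈ negUnits C := by
  rw [negUnits, Multiset.mem_map]
  exact ⟨l, h, rfl⟩

lemma negLit_negLit (l : Lit) : negLit (negLit l) = l := by
  cases l with
  | mk v b => cases b <;> rfl

/-- Restriction of a clause by a unit, when the negated literal is absent. -/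
lemma restrictClause_litSub {D : Clause} {l : Lit} (hl : l ∈ D) (hnl : negLit l ∉ D) :
    restrictClause (litSub (negLit l)) D = D.erase l := by
  ext m
  simp only [restrictClause, Finset.mem_biUnion, Finset.mem_erase]
  constructor
  · rintro ⟨a, ha, hm⟩
    by_cases hv : a.1 = l.1
    · have : a = l ∨ a = negLit l := by
        cases a with
        | mk v b =>
          cases l with
          | mk w c =>
            simp only at hv; subst hv
            cases b <;> cases c <;> simp [negLit] <;> rfl
      rcases this with rfl | rfl
      · rw [appLit_litSub_self] at hm; simp at hm
      · exact absurd ha hnl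
    · rw [appLit_litSub_other (negLit l) a hv] at hm
      simp at hm
      subst hm
      refine ⟨fun h => hv (by rw [h]), ha⟩
  · rintro ⟨hne, hm⟩
    refine ⟨m, hm, ?_⟩
    have hv : m.1 ≠ l.1 := by
      intro h
      have : m = l ∨ m = negLit l := by
        cases m with
        | mk v b =>
          cases l with
          | mk w c =>
            simp only at h; subst h
            cases b <;> cases c <;> simp [negLit] <;> rfl
      rcases this with rfl | rfl
      · exact hne rfl
      · exact hnl hm
    rw [appLit_litSub_other (negLit l) m hv]; simp

lemma not_clauseTrue_litSub {D : Clause} {l : Lit} (hnl : negLit l ∉ D) :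
    ¬ clauseTrue (litSub (negLit l)) D := by
  rintro ⟨a, ha, hm⟩
  by_cases hv : a.1 = l.1
  · have : a = l ∨ a = negLit l := by
      cases a with
      | mk v b =>
        cases l with
        | mk w c =>
          simp only at hv; subst hv
          cases b <;> cases c <;> simp [negLit] <;> rfl
    rcases this with rfl | rfl
    · rw [appLit_litSub_self] at hm; simp at hm
    · exact hnl ha
  · rw [appLit_litSub_other (negLit l) a hv] at hm; simp at hm

lemma restrict_negUnits_self {D : Clause} {l : Lit}
    (h : ∀ m ∈ D, m.1 ≠ l.1) :
    restrictCNF (litSub (negLit l)) (negUnits D) = negUnits D := by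
  rw [restrictCNF, negUnits, Multiset.filter_map, Multiset.map_map]
  rw [Multiset.filter_eq_self.2, Multiset.map_congr rfl]
  · intro m hm
    have hv : (negLit m).1 ≠ l.1 := h m hm
    simp only [Function.comp]
    ext x
    simp only [restrictClause, Finset.mem_biUnion, Finset.mem_singleton,
      exists_eq_left]
    rw [appLit_litSub_other (negLit l) (negLit m) hv]
    simp
  · intro m hm
    have hv : (negLit m).1 ≠ l.1 := h m hm
    simp only [Function.comp, clauseTrue, Finset.mem_singleton,
      exists_eq_left]
    rw [appLit_litSub_other (negLit l) (negLit m) hv]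
    simp

lemma negUnits_mono {D E : Clause} (h : D ⊆ E) : negUnits D ≤ negUnits E :=
  Multiset.map_le_map (Finset.val_le_iff.2 h)

/-- `Γ ⊢₁ D` whenever `D ∈ Γ`. -/
lemma UP_of_mem : ∀ (n : ℕ) {Γ : CNF} {D : Clause}, D.card ≤ n → D ∈ Γ →
    UPFalse (Γ + negUnits D) := by
  intro n
  induction n with
  | zero =>
      intro Γ D hc hD
      have : D = ∅ := Finset.card_eq_zero.1 (Nat.le_zero.1 hc)
      subst this
      exact UPFalse.empty (by simp [hD])
  | succ n ih =>
      intro Γ D hc hD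
      rcases Finset.eq_empty_or_nonempty D with rfl | ⟨l, hl⟩
      · exact UPFalse.empty (by simp [hD])
      · have hunit : ({negLit l} : Clause) ∈ Γ + negUnits D :=
          Multiset.mem_add.2 (Or.inr (negLit_mem_negUnits hl))
        refine UPFalse.step (negLit l) hunit ?_
        by_cases hnl : negLit l ∈ D
        · -- D is tautological: {l} is also a negUnit, restricting to ∅
          have hu : ({l} : Clause) ∈ Γ + negUnits D := by
            have := negLit_mem_negUnits hnl
            rw [negLit_negLit] at this
            exact Multiset.mem_add.2 (Or.inr this)
          exact UPFalse.empty (empty_mem_restrict_of_unit l hu)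
        · -- restrict: D becomes D.erase l
          have hDe : D.erase l ∈ restrictCNF (litSub (negLit l)) Γ := by
            rw [restrictCNF, Multiset.mem_map]
            exact ⟨D, Multiset.mem_filter.2 ⟨hD, not_clauseTrue_litSub hnl⟩,
              restrictClause_litSub hl hnl⟩
          have hcard : (D.erase l).card ≤ n := by
            have := Finset.card_erase_of_mem hl
            omega
          have hIH := ih hcard hDe
          refine UPFalse_mono hIH ?_
          rw [restrictCNF_add]
          refine add_le_add le_rfl ?_
          -- negUnits (D.erase l) ≤ restrictCNF (litSub (negLit l)) (negUnits D)
          have h1 : restrictCNF (litSub (negLit l)) (negUnits (D.erase l)) =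
              negUnits (D.erase l) := by
            apply restrict_negUnits_self
            intro m hm hv
            have hml : m ≠ l := (Finset.mem_erase.1 hm).1
            have hmD : m ∈ D := (Finset.mem_erase.1 hm).2
            have : m = l ∨ m = negLit l := by
              cases m with
              | mk v b =>
                cases l with
                | mk w c =>
                  simp only at hv; subst hv
                  cases b <;> cases c <;> simp [negLit] <;> rfl
            rcases this with rfl | rfl
            · exact hml rfl
            · exact hnl hmD
          calc negUnits (D.erase l)
              = restrictCNF (litSub (negLit l)) (negUnits (D.erase l)) := h1.symm
            _ ≤ restrictCNF (litSub (negLit l)) (negUnits D) :=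
                restrictCNF_mono _ (negUnits_mono (Finset.erase_subset l D))

lemma UPimplies_of_mem {Γ : CNF} {D : Clause} (h : D ∈ Γ) : UPimplies Γ D :=
  UP_of_mem D.card le_rfl h

/-- symmetry lemma: if a permutation `π` of the variables maps
the blocking variables to themselves and the substitution `¬C ∘ π` satisfies
`C`, then `Γ↾¬C ⊇ Γ↾(¬C∘π)` implies that `C` is cost-SR w.r.t. `Γ` with
witnessing substitution `¬C ∘ π`; in particular `Γ↾¬C ⊇ Γ↾(¬C∘π)` holds
whenever `π` is a symmetry of `Γ`, i.e. `Γ = Γ↾π`. -/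
theorem symmetry_lemma (B : Finset Var) (Γ : CNF) (C : Clause)
    (π : Equiv.Perm Var)
    (h1 : ∀ b ∈ B, π b ∈ B)
    (h2 : subSat (fun v => negSub C (π v)) C) :
    (restrictCNF (fun v => negSub C (π v)) Γ ≤ restrictCNF (negSub C) Γ →
      CostSRwit B Γ C (fun v => negSub C (π v))) ∧
    (restrictCNF (fun v => Sum.inr ((π v, true) : Lit)) Γ = Γ →
      restrictCNF (fun v => negSub C (π v)) Γ ≤ restrictCNF (negSub C) Γ) := by
  constructor
  · -- Part 1: the witness works
    intro hle
    refine ⟨?_, ?_⟩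
    · -- redundancy condition
      intro D hD
      rw [restrictCNF] at hD
      obtain ⟨E, hE, rfl⟩ := Multiset.mem_map.1 hD
      obtain ⟨hEmem, hEnt⟩ := Multiset.mem_filter.1 hE
      rcases Multiset.mem_cons.1 hEmem with rfl | hEΓ
      · -- the clause C itself: σ(C) is tautological
        rcases h2 with hct | htaut
        · exact absurd hct hEnt
        · obtain ⟨l, hl, hnl⟩ := htaut
          refine UPFalse.step (negLit l)
            (Multiset.mem_add.2 (Or.inr (negLit_mem_negUnits hl))) ?_
          have hu : ({l} : Clause) ∈ restrictCNF (negSub E) Γ +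
              negUnits (restrictClause (fun v => negSub E (π v)) E) := by
            have h' := negLit_mem_negUnits hnl
            rw [negLit_negLit] at h'
            exact Multiset.mem_add.2 (Or.inr h')
          exact UPFalse.empty (empty_mem_restrict_of_unit l hu)
      · -- a clause of Γ
        have hmem : restrictClause (fun v => negSub C (π v)) E ∈
            restrictCNF (negSub C) Γ := by
          refine Multiset.mem_of_le hle ?_
          rw [restrictCNF]
          exact Multiset.mem_map.2 ⟨E, Multiset.mem_filter.2 ⟨hEΓ, hEnt⟩, rfl⟩
        exact UPimplies_of_mem hmem
    · -- cost condition
      intro τ hτ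
      have hcomp : comp τ (fun v => negSub C (π v)) = fun v => τ (π v) := by
        funext v
        by_cases ha : ((π v, true) : Lit) ∈ C
        · have h' := hτ _ ha
          simp only [Bool.not_true] at h'
          simp [comp, negSub, ha, h']
        · by_cases hb : ((π v, false) : Lit) ∈ C
          · have h' := hτ _ hb
            simp only [Bool.not_false] at h'
            simp [comp, negSub, ha, hb, h']
          · simp [comp, negSub, ha, hb]
      rw [hcomp]
      have hBim : B.image π = B := by
        apply Finset.eq_of_subset_of_card_le
        · intro b hb
          rcases Finset.mem_image.1 hb with ⟨a, ha, rfl⟩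
          exact h1 a ha
        · rw [Finset.card_image_of_injective _ π.injective]
      have hcost : cost B (fun v => τ (π v)) = cost B τ := by
        unfold cost
        conv_rhs => rw [← hBim, Finset.filter_image,
          Finset.card_image_of_injective _ π.injective]
      exact hcost.le
  · -- Part 2: a symmetry of Γ gives the containment
    intro hsym
    set π' : Sub := fun v => Sum.inr ((π v, true) : Lit) with hπ'
    have happ : ∀ l : Lit, appLit π' l = Sum.inr ((π l.1, l.2) : Lit) := by
      rintro ⟨v, b⟩
      cases b <;> simp [appLit, negSV, negLit, hπ']
    have happ2 : ∀ l : Lit, appLit (fun v => negSub C (π v)) l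
        = appLit (negSub C) ((π l.1, l.2) : Lit) := by
      rintro ⟨v, b⟩
      cases b <;> rfl
    have hnoct : ∀ D : Clause, ¬ clauseTrue π' D := by
      rintro D ⟨l, hl, hval⟩
      rw [happ l] at hval
      cases hval
    have hrestr : restrictCNF π' Γ = Γ.map (restrictClause π') := by
      rw [restrictCNF, Multiset.filter_eq_self.2]
      intro D _
      exact hnoct D
    have hmem : ∀ (D : Clause) (x : Lit),
        x ∈ restrictClause π' D ↔ ∃ l ∈ D, (π l.1, l.2) = x := by
      intro D x
      simp only [restrictClause, Finset.mem_biUnion]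
      constructor
      · rintro ⟨l, hl, hx⟩
        rw [happ l] at hx
        simp only [Finset.mem_singleton] at hx
        exact ⟨l, hl, hx.symm⟩
      · rintro ⟨l, hl, hx⟩
        refine ⟨l, hl, ?_⟩
        rw [happ l]
        simp [hx]
    have hct : ∀ D : Clause, clauseTrue (negSub C) (restrictClause π' D) ↔
        clauseTrue (fun v => negSub C (π v)) D := by
      intro D
      constructor
      · rintro ⟨m, hm, hval⟩
        obtain ⟨l, hl, rfl⟩ := (hmem D m).1 hm
        exact ⟨l, hl, by rw [happ2 l]; exact hval⟩
      · rintro ⟨l, hl, hval⟩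
        exact ⟨(π l.1, l.2), (hmem D _).2 ⟨l, hl, rfl⟩, by rw [← happ2 l]; exact hval⟩
    have hrc : ∀ D : Clause, restrictClause (negSub C) (restrictClause π' D) =
        restrictClause (fun v => negSub C (π v)) D := by
      intro D
      ext x
      constructor
      · intro hx
        obtain ⟨m, hm, hx⟩ := Finset.mem_biUnion.1 hx
        obtain ⟨l, hl, rfl⟩ := (hmem D m).1 hm
        refine Finset.mem_biUnion.2 ⟨l, hl, ?_⟩
        rw [happ2 l]
        exact hx
      · intro hx
        obtain ⟨l, hl, hx⟩ := Finset.mem_biUnion.1 hx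
        rw [happ2 l] at hx
        exact Finset.mem_biUnion.2 ⟨(π l.1, l.2), (hmem D _).2 ⟨l, hl, rfl⟩, hx⟩
    have key : restrictCNF (fun v => negSub C (π v)) Γ =
        restrictCNF (negSub C) (restrictCNF π' Γ) := by
      rw [hrestr, restrictCNF, restrictCNF, Multiset.filter_map, Multiset.map_map]
      have hfil : Multiset.filter
            (fun D => ¬ clauseTrue (fun v => negSub C (π v)) D) Γ =
          Multiset.filter ((fun D => ¬ clauseTrue (negSub C) D) ∘ restrictClause π') Γ := by
        apply Multiset.filter_congr
        intro D _
        simp only [Function.comp]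
        exact (not_congr (hct D)).symm
      rw [← hfil]
      apply Multiset.map_congr rfl
      intro D _
      exact (hrc D).symm
    rw [key, hsym]


end PaperMaxSAT
end

section
/- Soundness of MaxSAT resolution + cost-SR: let H₀ = {C₁∨b₁,…,C_m∨b_m} be a satisfiable set of hard clauses with blocking variables b₁,…,b_m, and S₀ = {¬b₁,…,¬b_m} the corresponding multiset of soft clauses. If a MaxSAT resolution + cost-SR derivation starting from (H₀,S₀) reaches a pair (H_t,S_t) such that the empty clause ⊥ occurs in S_t with multiplicity at least k, then cost(H₀) ≥ k, i.e., every total assignment satisfying H₀ falsifies at least k clauses of S₀. -/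
namespace PaperMaxSAT

/-- One step of a MaxSAT resolution + cost-SR derivation on a pair
`(H, S)` of hard and soft clauses:
(a) add to `H` a resolvent of two clauses of `H`;
(a') add to `H` a clause which is cost-SR w.r.t. `H`;
(b) copy a clause of `H` into `S`;
(c) replace a soft clause `C` by `C ∨ x` and `C ∨ ¬x`;
(d) replace soft clauses `C ∨ x` and `C ∨ ¬x` by `C`. -/
inductive MRStep (B : Finset Var) : CNF × CNF → CNF × CNF → Prop
  | res {H S : CNF} {C E₁ E₂ : Clause} :
      E₁ ∈ H → E₂ ∈ H → resolvent C E₁ E₂ → MRStep B (H, S) (C ::ₘ H, S)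
  | sr {H S : CNF} {C : Clause} :
      CostSR B H C → MRStep B (H, S) (C ::ₘ H, S)
  | copy {H S : CNF} {C : Clause} :
      C ∈ H → MRStep B (H, S) (H, C ::ₘ S)
  | split {H S : CNF} {C : Clause} (x : Var) :
      C ∈ S →
      MRStep B (H, S)
        (H, insert ((x, true) : Lit) C ::ₘ insert ((x, false) : Lit) C ::ₘ S.erase C)
  | merge {H S : CNF} {C : Clause} (x : Var) :
      insert ((x, true) : Lit) C ∈ S → insert ((x, false) : Lit) C ∈ S →
      MRStep B (H, S)
        (H, C ::ₘ ((S.erase (insert ((x, true) : Lit) C)).erase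
              (insert ((x, false) : Lit) C)))

/-!
Along a derivation the hard clauses only grow, and each step can only lower the number of soft
clauses falsified by a model of the current hard clauses: a copied clause is satisfied, and a
model falsifies exactly one of `C ∨ x`, `C ∨ ¬x` if it falsifies `C`, and neither otherwise.
Conversely a model `τ` of `H₀` can be carried along to a model of `H_t` of no larger cost:
resolvents are implied, and if `τ` falsifies a cost-SR clause `C` then `τ ∘ σ` satisfies
`H ∪ {C}`, because `τ` extends `¬C` and unit propagation is sound, and by the cost condition costs no
more than `τ`. As a model of `H_t` falsifies every copy of `⊥` in `S_t`, and a total assignment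
falsifies exactly `cost` many of the units `¬bᵢ` in `S₀`, `k ≤ cost(τ)` for every model `τ` of
`H₀`.
-/

def evalLit (α : TAssign) (l : Lit) : Bool := if l.2 then α l.1 else !(α l.1)

def evalSV (α : TAssign) : SubVal → Bool
  | .inl b => b
  | .inr l => evalLit α l

lemma evalLit_eq_true {α : TAssign} {l : Lit} : evalLit α l = true ↔ α l.1 = l.2 := by
  obtain ⟨x, _ | _⟩ := l <;> simp [evalLit]

lemma evalSV_negSV (α : TAssign) (s : SubVal) : evalSV α (negSV s) = !evalSV α s := by
  obtain _ | ⟨x, _ | _⟩ := s <;> simp [negSV, evalSV, negLit, evalLit]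

lemma comp_apply (τ : TAssign) (σ : Sub) (v : Var) : comp τ σ v = evalSV τ (σ v) := by
  cases h : σ v <;> simp [comp, h, evalSV, evalLit]

lemma evalLit_comp (τ : TAssign) (σ : Sub) (l : Lit) :
    evalLit (comp τ σ) l = evalSV τ (appLit σ l) := by
  obtain ⟨x, _ | _⟩ := l <;> simp [evalLit, appLit, comp_apply, evalSV_negSV]

lemma satC_iff_exists_evalLit {α : TAssign} {C : Clause} :
    satC α C ↔ ∃ l ∈ C, evalLit α l = true := by
  simp only [satC, evalLit_eq_true]

lemma not_satC_iff_extendsNeg {α : TAssign} {C : Clause} : ¬ satC α C ↔ extendsNeg α C := by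
  refine not_exists.trans (forall_congr' fun l => ?_)
  cases α l.1 <;> cases l.2 <;> simp

lemma satC_mono {α : TAssign} {C D : Clause} (hCD : C ⊆ D) (hC : satC α C) : satC α D :=
  let ⟨l, hl, hα⟩ := hC
  ⟨l, hCD hl, hα⟩

lemma satC_insert {α : TAssign} {l : Lit} {C : Clause} :
    satC α (insert l C) ↔ α l.1 = l.2 ∨ satC α C := by
  simp [satC, or_and_right, exists_or]

lemma satCNF_cons {α : TAssign} {C : Clause} {Γ : CNF} :
    satCNF α (C ::ₘ Γ) ↔ satC α C ∧ satCNF α Γ := by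
  simp [satCNF]

lemma satCNF_of_le {α : TAssign} {Γ Δ : CNF} (hle : Γ ≤ Δ) (h : satCNF α Δ) : satCNF α Γ :=
  fun C hC => h C (Multiset.mem_of_le hle hC)

lemma mem_restrictClause {σ : Sub} {C : Clause} {m : Lit} :
    m ∈ restrictClause σ C ↔ ∃ l ∈ C, appLit σ l = .inr m := by
  simp only [restrictClause, Finset.mem_biUnion]
  refine exists_congr fun l => and_congr_right fun _ => ?_
  cases appLit σ l <;> simp [eq_comm]

lemma satC_comp_iff {τ : TAssign} {σ : Sub} {C : Clause} :
    satC (comp τ σ) C ↔ clauseTrue σ C ∨ satC τ (restrictClause σ C) := by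
  simp only [satC_iff_exists_evalLit, evalLit_comp, clauseTrue, mem_restrictClause]
  constructor
  · rintro ⟨l, hl, he⟩
    cases h : appLit σ l with
    | inl c => exact .inl ⟨l, hl, by rw [h] at he ⊢; exact congrArg _ he⟩
    | inr m => exact .inr ⟨m, ⟨l, hl, h⟩, by rwa [h] at he⟩
  · rintro (⟨l, hl, h⟩ | ⟨m, ⟨l, hl, h⟩, he⟩)
    · exact ⟨l, hl, by rw [h]; rfl⟩
    · exact ⟨l, hl, by rwa [h]⟩

lemma satCNF_comp_iff {τ : TAssign} {σ : Sub} {Γ : CNF} :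
    satCNF (comp τ σ) Γ ↔ satCNF τ (restrictCNF σ Γ) := by
  simp only [satCNF, restrictCNF, Multiset.mem_map, Multiset.mem_filter, satC_comp_iff]
  constructor
  · rintro h _ ⟨C, ⟨hC, hnt⟩, rfl⟩
    exact (h C hC).resolve_left hnt
  · intro h C hC
    by_cases ht : clauseTrue σ C
    · exact .inl ht
    · exact .inr (h _ ⟨C, ⟨hC, ht⟩, rfl⟩)

lemma comp_eq_self {τ : TAssign} {σ : Sub}
    (h : ∀ v, σ v = .inr (v, true) ∨ σ v = .inl (τ v)) : comp τ σ = τ := by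
  funext v
  rcases h v with h | h <;> simp [comp, h]

lemma UPFalse.not_satCNF {Γ : CNF} (h : UPFalse Γ) (α : TAssign) : ¬ satCNF α Γ := by
  induction h with
  | empty hmem => exact fun hα => by simpa [satC] using hα _ hmem
  | step l hmem _ ih =>
    intro hα
    have hαl : α l.1 = l.2 := by
      obtain ⟨_, hl, hαl⟩ := hα _ hmem
      rwa [Finset.mem_singleton.1 hl] at hαl
    have hcomp : comp α (litSub l) = α := comp_eq_self fun v => by
      by_cases hv : v = l.1
      · subst hv; simp [litSub, hαl]
      · simp [litSub, hv]
    exact ih (satCNF_comp_iff.1 (by rwa [hcomp]))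

lemma UPimplies.satC {Γ : CNF} {D : Clause} {α : TAssign}
    (h : UPimplies Γ D) (hα : satCNF α Γ) : satC α D := by
  by_contra hD
  refine UPFalse.not_satCNF h α fun E hE => ?_
  rcases Multiset.mem_add.1 hE with hE | hE
  · exact hα _ hE
  · obtain ⟨l, hl, rfl⟩ := Multiset.mem_map.1 hE
    exact ⟨negLit l, Finset.mem_singleton_self _, by
      simpa [negLit] using not_satC_iff_extendsNeg.1 hD l hl⟩

lemma comp_negSub_of_extendsNeg {τ : TAssign} {C : Clause} (h : extendsNeg τ C) :
    comp τ (negSub C) = τ := comp_eq_self fun v => by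
  by_cases h1 : ((v, true) : Lit) ∈ C
  · simp [negSub, h1, h _ h1]
  · by_cases h2 : ((v, false) : Lit) ∈ C
    · simp [negSub, h1, h2, h _ h2]
    · simp [negSub, h1, h2]

lemma CostSRwit.satCNF_comp {B : Finset Var} {Γ : CNF} {C : Clause} {σ : Sub} {τ : TAssign}
    (h : CostSRwit B Γ C σ) (hτ : satCNF τ Γ) (hC : ¬ satC τ C) :
    satCNF (comp τ σ) (C ::ₘ Γ) ∧ cost B (comp τ σ) ≤ cost B τ := by
  have hext := not_satC_iff_extendsNeg.1 hC
  have hres : satCNF τ (restrictCNF (negSub C) Γ) :=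
    satCNF_comp_iff.1 ((comp_negSub_of_extendsNeg hext).symm ▸ hτ)
  exact ⟨satCNF_comp_iff.2 fun D hD => (h.1 D hD).satC hres, h.2 τ hext⟩

lemma CostSR.exists_satCNF_cons {B : Finset Var} {Γ : CNF} {C : Clause} {τ : TAssign}
    (h : CostSR B Γ C) (hτ : satCNF τ Γ) :
    ∃ τ', satCNF τ' (C ::ₘ Γ) ∧ cost B τ' ≤ cost B τ := by
  by_cases hC : satC τ C
  · exact ⟨τ, satCNF_cons.2 ⟨hC, hτ⟩, le_rfl⟩
  · obtain ⟨σ, hσ⟩ := h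
    exact ⟨comp τ σ, hσ.satCNF_comp hτ hC⟩

lemma resolvent.satC {α : TAssign} {D E₁ E₂ : Clause} (h : resolvent D E₁ E₂)
    (h₁ : satC α E₁) (h₂ : satC α E₂) : satC α D := by
  obtain ⟨x, hx₁, hx₂, rfl⟩ := h
  cases hαx : α x
  · obtain ⟨l, hl, he⟩ := h₁
    refine ⟨l, Finset.mem_union_left _ (Finset.mem_erase.2 ⟨?_, hl⟩), he⟩
    rintro rfl; simp_all
  · obtain ⟨l, hl, he⟩ := h₂
    refine ⟨l, Finset.mem_union_right _ (Finset.mem_erase.2 ⟨?_, hl⟩), he⟩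
    rintro rfl; simp_all

def numFalsified (α : TAssign) (S : CNF) : ℕ := S.countP fun C => ¬ satC α C

lemma count_empty_le_numFalsified (α : TAssign) (S : CNF) :
    S.count ∅ ≤ numFalsified α S := by
  rw [numFalsified, Multiset.countP_eq_card_filter,
    ← Multiset.count_filter_of_pos (p := fun C => ¬ satC α C) (by simp [satC])]
  exact Multiset.count_le_card _ _

lemma numFalsified_cons (α : TAssign) (C : Clause) (S : CNF) :
    numFalsified α (C ::ₘ S) = numFalsified α S + if satC α C then 0 else 1 := by
  simp [numFalsified, Multiset.countP_cons]

lemma numFalsified_erase_add_one {α : TAssign} {C : Clause} {S : CNF} (hC : C ∈ S)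
    (hα : ¬ satC α C) : numFalsified α (S.erase C) + 1 = numFalsified α S := by
  conv_rhs => rw [← Multiset.cons_erase hC]
  simp [numFalsified_cons, hα]

lemma numFalsified_mono {α : TAssign} {S T : CNF} (h : S ≤ T) :
    numFalsified α S ≤ numFalsified α T :=
  Multiset.countP_le_of_le _ h

lemma numFalsified_split_le (α : TAssign) (x : Var) {C : Clause} {S : CNF} (hC : C ∈ S) :
    numFalsified α (insert (x, true) C ::ₘ insert (x, false) C ::ₘ S.erase C)
      ≤ numFalsified α S := by
  conv_rhs => rw [← Multiset.cons_erase hC]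
  simp only [numFalsified_cons]
  by_cases hα : satC α C
  · simp [satC_insert, hα]
  · cases hx : α x <;> simp [satC_insert, hα, hx]

lemma numFalsified_merge_le (α : TAssign) (x : Var) {C : Clause} {S : CNF}
    (hpos : insert (x, true) C ∈ S) (hneg : insert (x, false) C ∈ S) :
    numFalsified α (C ::ₘ ((S.erase (insert (x, true) C)).erase (insert (x, false) C)))
      ≤ numFalsified α S := by
  rw [numFalsified_cons]
  by_cases hα : satC α C
  · simpa [hα] using numFalsified_mono ((Multiset.erase_le _ _).trans (Multiset.erase_le _ S))
  · -- `α` falsifies one of the two merged clauses, which pays for `C`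
    simp only [hα, if_false]
    cases hx : α x
    · rw [← numFalsified_erase_add_one hpos (by simp [satC_insert, hα, hx])]
      exact Nat.add_le_add_right (numFalsified_mono (Multiset.erase_le _ _)) 1
    · rw [Multiset.erase_comm, ← numFalsified_erase_add_one hneg (by simp [satC_insert, hα, hx])]
      exact Nat.add_le_add_right (numFalsified_mono (Multiset.erase_le _ _)) 1

lemma MRStep.hard_le {B : Finset Var} {p q : CNF × CNF} (h : MRStep B p q) : p.1 ≤ q.1 := by
  cases h <;> simp [Multiset.le_cons_self]

lemma MRStep.numFalsified_le {B : Finset Var} {p q : CNF × CNF} {α : TAssign}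
    (h : MRStep B p q) (hα : satCNF α p.1) : numFalsified α q.2 ≤ numFalsified α p.2 := by
  cases h with
  | res | sr => exact le_rfl
  | copy hC => simp [numFalsified_cons, hα _ hC]
  | split x hC => exact numFalsified_split_le α x hC
  | merge x hpos hneg => exact numFalsified_merge_le α x hpos hneg

lemma MRStep.exists_satCNF_cost_le {B : Finset Var} {p q : CNF × CNF} {τ : TAssign}
    (h : MRStep B p q) (hτ : satCNF τ p.1) : ∃ τ', satCNF τ' q.1 ∧ cost B τ' ≤ cost B τ := by
  cases h with
  | res hE₁ hE₂ hres => exact ⟨τ, satCNF_cons.2 ⟨hres.satC (hτ _ hE₁) (hτ _ hE₂), hτ⟩, le_rfl⟩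
  | sr hC => exact hC.exists_satCNF_cons hτ
  | copy | split | merge => exact ⟨τ, hτ, le_rfl⟩

lemma numFalsified_le_of_reflTransGen {B : Finset Var} {p q : CNF × CNF} {α : TAssign}
    (h : Relation.ReflTransGen (MRStep B) p q) (hα : satCNF α q.1) :
    numFalsified α q.2 ≤ numFalsified α p.2 := by
  induction h with
  | refl => exact le_rfl
  | tail _ hstep ih =>
    have hα' := satCNF_of_le hstep.hard_le hα
    exact (hstep.numFalsified_le hα').trans (ih hα')

lemma exists_satCNF_cost_le_of_reflTransGen {B : Finset Var} {p q : CNF × CNF} {τ : TAssign}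
    (h : Relation.ReflTransGen (MRStep B) p q) (hτ : satCNF τ p.1) :
    ∃ τ', satCNF τ' q.1 ∧ cost B τ' ≤ cost B τ := by
  induction h with
  | refl => exact ⟨τ, hτ, le_rfl⟩
  | tail _ hstep ih =>
    obtain ⟨τ₁, hτ₁, hc₁⟩ := ih
    obtain ⟨τ₂, hτ₂, hc₂⟩ := hstep.exists_satCNF_cost_le hτ₁
    exact ⟨τ₂, hτ₂, hc₂.trans hc₁⟩

def softUnits {m : ℕ} (b : Fin m → Var) : CNF :=
  ↑((List.finRange m).map fun i => ({((b i, false) : Lit)} : Clause))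

lemma numFalsified_softUnits {m : ℕ} {b : Fin m → Var} (hinj : Function.Injective b)
    (α : TAssign) : numFalsified α (softUnits b) = cost (Finset.image b Finset.univ) α := by
  rw [numFalsified, softUnits, ← Multiset.map_coe, ← Finset.val_univ_fin, Multiset.countP_map,
    cost, Finset.filter_image, Finset.card_image_of_injective _ hinj, Finset.card_def,
    Finset.filter_val]
  congr 2
  ext i
  simp [satC]

theorem maxsat_res_costSR_soundness_general (m : ℕ) (b : Fin m → Var)
    (hinj : Function.Injective b)
    (H0 S0 : CNF)
    (hS0 : S0 = (↑((List.finRange m).map fun i => ({((b i, false) : Lit)} : Clause)) : CNF))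
    (hsat : ∃ α : TAssign, satCNF α H0)
    (Ht St : CNF) (k : ℕ)
    (hder : Relation.ReflTransGen (MRStep (Finset.image b Finset.univ)) (H0, S0) (Ht, St))
    (hbot : k ≤ St.count (∅ : Clause)) :
    k ≤ costCNF (Finset.image b Finset.univ) H0 ∧
    ∀ α : TAssign, satCNF α H0 →
      k ≤ Multiset.card (S0.filter fun C => ¬ satC α C) := by
  have hsoft : ∀ α, numFalsified α S0 = cost (Finset.image b Finset.univ) α :=
    fun α => hS0 ▸ numFalsified_softUnits hinj α
  have hcost : ∀ τ, satCNF τ H0 → k ≤ cost (Finset.image b Finset.univ) τ := fun τ hτ => by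
    obtain ⟨τ', hτ', hcost⟩ := exists_satCNF_cost_le_of_reflTransGen hder hτ
    calc k ≤ St.count ∅ := hbot
      _ ≤ numFalsified τ' St := count_empty_le_numFalsified τ' St
      _ ≤ numFalsified τ' S0 := numFalsified_le_of_reflTransGen hder hτ'
      _ = cost (Finset.image b Finset.univ) τ' := hsoft τ'
      _ ≤ cost (Finset.image b Finset.univ) τ := hcost
  obtain ⟨α₀, hα₀⟩ := hsat
  refine ⟨le_csInf ⟨_, α₀, hα₀, rfl⟩ ?_, fun α hα => ?_⟩
  · rintro _ ⟨α, hα, rfl⟩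
    exact hcost α hα
  · rw [← Multiset.countP_eq_card_filter, ← numFalsified, hsoft]
    exact hcost α hα

/-- soundness of MaxSAT resolution + cost-SR: if a MaxSAT
resolution + cost-SR derivation from `(H₀, S₀)` with
`H₀ = {C₁∨b₁,…,C_m∨b_m}` satisfiable and `S₀ = {¬b₁,…,¬b_m}` reaches a pair
`(H_t, S_t)` in which the empty clause occurs with multiplicity at least `k`,
then `cost(H₀) ≥ k`, i.e. every total assignment satisfying `H₀` falsifies at
least `k` clauses of `S₀`. -/
theorem maxsat_res_costSR_soundness (m : ℕ) (b : Fin m → Var)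
    (Cs : Fin m → Clause) (hinj : Function.Injective b)
    (H0 S0 : CNF)
    (hH0 : H0 = (↑((List.finRange m).map fun i => insert ((b i, true) : Lit) (Cs i)) : CNF))
    (hS0 : S0 = (↑((List.finRange m).map fun i => ({((b i, false) : Lit)} : Clause)) : CNF))
    (hsat : ∃ α : TAssign, satCNF α H0)
    (Ht St : CNF) (k : ℕ)
    (hder : Relation.ReflTransGen (MRStep (Finset.image b Finset.univ)) (H0, S0) (Ht, St))
    (hbot : k ≤ St.count (∅ : Clause)) :
    k ≤ costCNF (Finset.image b Finset.univ) H0 ∧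
    ∀ α : TAssign, satCNF α H0 →
      k ≤ Multiset.card (S0.filter fun C => ¬ satC α C) :=
  maxsat_res_costSR_soundness_general m b hinj H0 S0 hS0 hsat Ht St k hder hbot

end PaperMaxSAT
end
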